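/- arXiv:2505.07758 — 2 statements merged into one kernel-verified Lean document; each statement's English description precedes it below -/
import Mathlib

section
/- If H admits a (2k+1)-neighborhood balanced coloring in which all color classes have equal size, then for any graph G the lexicographic product G[H] admits a (2k+1)-neighborhood balanced coloring. -/
/-- A `(2k+1)`-neighborhood balanced coloring: every vertex has an equal number of
neighbors of each of the `2k+1` colors. -/
def NBColoring {V : Type*} (G : SimpleGraph V) (k : ℕ) (c : V → Fin (2*k+1)) : Prop :=
  ∀ v : V, ∀ i j : Fin (2*k+1),
    Nat.card {u : V // G.Adj v u ∧ c u = i} = Nat.card {u : V // G.Adj v u ∧ c u = j}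

/-- Lexicographic product of simple graphs. -/
def lexProd {α β : Type*} (G : SimpleGraph α) (H : SimpleGraph β) : SimpleGraph (α × β) where
  Adj x y := G.Adj x.1 y.1 ∨ (x.1 = y.1 ∧ H.Adj x.2 y.2)
  symm := by
    constructor
    rintro x y (h | ⟨h1, h2⟩)
    · exact Or.inl h.symm
    · exact Or.inr ⟨h1.symm, h2.symm⟩
  loopless := by
    constructor
    rintro x (h | ⟨_, h⟩)
    · exact G.loopless.irrefl _ h
    · exact H.loopless.irrefl _ h

open Classical in
noncomputable def splitEquiv {α β : Type*} (G : SimpleGraph α) (H : SimpleGraph β)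
    {k : ℕ} (c : β → Fin (2*k+1)) (a : α) (b : β) (i : Fin (2*k+1)) :
    {u : α × β // (lexProd G H).Adj (a, b) u ∧ c u.2 = i} ≃
      ({a' : α // G.Adj a a'} × {v : β // c v = i}) ⊕ {v : β // H.Adj b v ∧ c v = i} where
  toFun := fun ⟨⟨a', v⟩, h⟩ =>
    if ha : G.Adj a a' then Sum.inl (⟨a', ha⟩, ⟨v, h.2⟩)
    else Sum.inr ⟨v, by
      rcases h.1 with h1 | ⟨_, h2⟩
      · exact absurd h1 ha
      · exact ⟨h2, h.2⟩⟩
  invFun := fun s => match s with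
    | Sum.inl (⟨a', ha⟩, ⟨v, hv⟩) => ⟨(a', v), Or.inl ha, hv⟩
    | Sum.inr ⟨v, hv⟩ => ⟨(a, v), Or.inr ⟨rfl, hv.1⟩, hv.2⟩
  left_inv := by
    rintro ⟨⟨a', v⟩, h⟩
    by_cases ha : G.Adj a a'
    · simp [ha]
    · simp only [ha, dif_neg, not_false_iff]
      rcases h.1 with h1 | ⟨h2, _⟩
      · exact absurd h1 ha
      · obtain rfl : a = a' := h2
        simp
  right_inv := by
    rintro (⟨⟨a', ha⟩, ⟨v, hv⟩⟩ | ⟨v, hv⟩)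
    · simp [ha]
    · have : ¬ G.Adj a a := G.loopless.irrefl a
      simp [this]

theorem stmt7 {α β : Type*} [Fintype α] [Fintype β]
    (G : SimpleGraph α) (H : SimpleGraph β) (k : ℕ) (hk : 1 ≤ k)
    (hH : ∃ c : β → Fin (2*k+1), NBColoring H k c ∧
      ∀ i j : Fin (2*k+1), Nat.card {v : β // c v = i} = Nat.card {v : β // c v = j}) :
    ∃ c : α × β → Fin (2*k+1), NBColoring (lexProd G H) k c := by
  obtain ⟨c, hNB, hEq⟩ := hH
  refine ⟨fun p => c p.2, ?_⟩
  rintro ⟨a, b⟩ i j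
  have key : ∀ i : Fin (2*k+1),
      Nat.card {u : α × β // (lexProd G H).Adj (a, b) u ∧ c u.2 = i} =
        Nat.card {a' : α // G.Adj a a'} * Nat.card {v : β // c v = i} +
          Nat.card {v : β // H.Adj b v ∧ c v = i} := by
    intro i
    rw [Nat.card_congr (splitEquiv G H c a b i), Nat.card_sum, Nat.card_prod]
  rw [key i, key j, hEq i j, hNB b i j]
end

section
/- If G and H are both regular graphs (of positive degree) admitting (2k+1)-neighborhood balanced colorings, then the join G + H admits a (2k+1)-neighborhood balanced coloring. -/
/-- Join of two simple graphs on disjoint vertex sets. -/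
def joinG {α β : Type*} (G : SimpleGraph α) (H : SimpleGraph β) : SimpleGraph (α ⊕ β) where
  Adj x y :=
    match x, y with
    | Sum.inl a, Sum.inl b => G.Adj a b
    | Sum.inr a, Sum.inr b => H.Adj a b
    | _, _ => True
  symm := by
    constructor
    rintro (a | a) (b | b) h
    · exact h.symm
    · trivial
    · trivial
    · exact h.symm
  loopless := by
    constructor
    rintro (a | a) h
    · exact G.loopless.irrefl a h
    · exact H.loopless.irrefl a h

open Finset in
lemma classes_eq {V : Type*} [Fintype V] (G : SimpleGraph V)
    (k d : ℕ) (hd : 0 < d)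
    (hreg : ∀ v : V, Nat.card (G.neighborSet v) = d)
    (c : V → Fin (2*k+1)) (hc : NBColoring G k c) (i j : Fin (2*k+1)) :
    Nat.card {u : V // c u = i} = Nat.card {u : V // c u = j} := by
  classical
  have key : ∀ m : Fin (2*k+1),
      ∑ v : V, Nat.card {u : V // G.Adj v u ∧ c u = m}
        = d * Nat.card {u : V // c u = m} := by
    intro m
    have h1 : ∀ v : V, Nat.card {u : V // G.Adj v u ∧ c u = m}
        = (univ.filter (fun u => G.Adj v u ∧ c u = m)).card := by
      intro v
      rw [Nat.card_eq_fintype_card, Fintype.card_subtype]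
    simp_rw [h1, card_filter]
    rw [Finset.sum_comm]
    have h2 : ∀ u : V, ∑ v : V, (if G.Adj v u ∧ c u = m then 1 else 0)
        = if c u = m then d else 0 := by
      intro u
      by_cases h : c u = m
      · simp only [h, and_true, if_true]
        have : ∑ v : V, (if G.Adj v u then 1 else 0)
            = (univ.filter (fun v => G.Adj v u)).card := by
          rw [card_filter]
        rw [this]
        calc (univ.filter (fun v => G.Adj v u)).card
            = Fintype.card {v // G.Adj v u} := (Fintype.card_subtype _).symm
          _ = Fintype.card {v // G.Adj u v} :=
              Fintype.card_congr (Equiv.subtypeEquivRight fun v => by rw [G.adj_comm])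
          _ = d := by have := hreg u; rwa [Nat.card_eq_fintype_card] at this
      · simp [h]
    simp_rw [h2]
    rw [← Finset.sum_filter, Finset.sum_const, smul_eq_mul, mul_comm,
      Nat.card_eq_fintype_card, Fintype.card_subtype]
  have e1 : ∑ v : V, Nat.card {u : V // G.Adj v u ∧ c u = i}
      = ∑ v : V, Nat.card {u : V // G.Adj v u ∧ c u = j} :=
    Finset.sum_congr rfl fun v _ => hc v i j
  rw [key i, key j] at e1
  exact Nat.eq_of_mul_eq_mul_left hd e1

theorem stmt13 {α β : Type*} [Fintype α] [Fintype β]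
    (G : SimpleGraph α) (H : SimpleGraph β) (k r s : ℕ) (hk : 1 ≤ k)
    (hr : 0 < r) (hs : 0 < s)
    (hGreg : ∀ v : α, Nat.card (G.neighborSet v) = r)
    (hHreg : ∀ v : β, Nat.card (H.neighborSet v) = s)
    (hG : ∃ c : α → Fin (2*k+1), NBColoring G k c)
    (hH : ∃ c : β → Fin (2*k+1), NBColoring H k c) :
    ∃ c : α ⊕ β → Fin (2*k+1), NBColoring (joinG G H) k c := by
  obtain ⟨cG, hcG⟩ := hG
  obtain ⟨cH, hcH⟩ := hH
  refine ⟨Sum.elim cG cH, ?_⟩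
  rintro (a | b) i j
  · have split : ∀ m : Fin (2*k+1),
        Nat.card {u : α ⊕ β // (joinG G H).Adj (Sum.inl a) u ∧ Sum.elim cG cH u = m}
          = Nat.card {x : α // G.Adj a x ∧ cG x = m} + Nat.card {y : β // cH y = m} := by
      intro m
      rw [Nat.card_congr (Equiv.subtypeSum), Nat.card_sum]
      have e1 := Nat.card_congr (Equiv.subtypeEquivRight (fun x : α =>
        show (joinG G H).Adj (Sum.inl a) (Sum.inl x) ∧ cG x = m ↔ G.Adj a x ∧ cG x = m
        from Iff.rfl))
      have e2 := Nat.card_congr (Equiv.subtypeEquivRight (fun y : β =>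
        show (joinG G H).Adj (Sum.inl a) (Sum.inr y) ∧ cH y = m ↔ cH y = m
        by simp [joinG]))
      simp only [Sum.elim_inl, Sum.elim_inr]
      rw [e1, e2]
    rw [split i, split j, hcG a i j, classes_eq H k s hs hHreg cH hcH i j]
  · have split : ∀ m : Fin (2*k+1),
        Nat.card {u : α ⊕ β // (joinG G H).Adj (Sum.inr b) u ∧ Sum.elim cG cH u = m}
          = Nat.card {x : α // cG x = m} + Nat.card {y : β // H.Adj b y ∧ cH y = m} := by
      intro m
      rw [Nat.card_congr (Equiv.subtypeSum), Nat.card_sum]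
      have e1 := Nat.card_congr (Equiv.subtypeEquivRight (fun x : α =>
        show (joinG G H).Adj (Sum.inr b) (Sum.inl x) ∧ cG x = m ↔ cG x = m
        by simp [joinG]))
      have e2 := Nat.card_congr (Equiv.subtypeEquivRight (fun y : β =>
        show (joinG G H).Adj (Sum.inr b) (Sum.inr y) ∧ cH y = m ↔ H.Adj b y ∧ cH y = m
        from Iff.rfl))
      simp only [Sum.elim_inl, Sum.elim_inr]
      rw [e1, e2]
    rw [split i, split j, hcH b i j, classes_eq G k r hr hGreg cG hcG i j]
end
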